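/- arXiv:2101.02759 — 4 statements merged into one kernel-verified Lean document; each statement's English description precedes it below -/
import Mathlib

section
/- Let g be a finite-dimensional complex semisimple Lie algebra with Killing form κ, let ζ, e ∈ g with ⁅ζ, e⁆ = e, and let φ : g → g be a Lie algebra automorphism with φ(ζ) = ζ. If (h, e, f) and (h′, φ(e), f′) are sl₂-triples in g, then κ(ζ, h) = κ(ζ, h′). In particular (taking φ = id), any two sl₂-triples through the same element e yield the same value κ(ζ, h), so the Toledo rank rk_T(e) = (1/2)·κ(ζ, h)·B(γ,γ) is well defined and is constant along orbits of automorphisms of g fixing ζ. -/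
/-- An `sl₂`-triple `(h, e, f)` in a Lie algebra: `⁅h,e⁆ = 2e`, `⁅h,f⁆ = -2f`, `⁅e,f⁆ = h`. -/
def IsSl2TripleIn {g : Type*} [LieRing g] [LieAlgebra ℂ g] (h e f : g) : Prop :=
  ⁅h, e⁆ = (2 : ℂ) • e ∧ ⁅h, f⁆ = (-2 : ℂ) • f ∧ ⁅e, f⁆ = h

/-- Two `sl₂`-triples through the same `e`, with `⁅ζ, e⁆ = e`, give the same `κ(ζ, h)`. -/
lemma killingForm_zeta_h_key {g : Type*} [LieRing g] [LieAlgebra ℂ g]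
    [Module.Finite ℂ g]
    (ζ E : g) (hE : ⁅ζ, E⁆ = E)
    (h₁ f₁ h₂ f₂ : g) (t1 : IsSl2TripleIn h₁ E f₁) (t2 : IsSl2TripleIn h₂ E f₂) :
    killingForm ℂ g ζ h₁ = killingForm ℂ g ζ h₂ := by
  obtain ⟨a1, -, c1⟩ := t1
  obtain ⟨a2, -, c2⟩ := t2
  have k1 : killingForm ℂ g ζ h₁ = killingForm ℂ g E f₁ := by
    conv_lhs => rw [← c1, ← LieModule.traceForm_apply_lie_apply, hE]
  have k2 : killingForm ℂ g ζ h₂ = killingForm ℂ g E f₂ := by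
    conv_lhs => rw [← c2, ← LieModule.traceForm_apply_lie_apply, hE]
  have m1 : (2 : ℂ) * killingForm ℂ g E f₁ = killingForm ℂ g h₂ h₁ := by
    conv_rhs => rw [← c1, ← LieModule.traceForm_apply_lie_apply, a2]
    simp
  have m2 : (2 : ℂ) * killingForm ℂ g E f₂ = killingForm ℂ g h₁ h₂ := by
    conv_rhs => rw [← c2, ← LieModule.traceForm_apply_lie_apply, a1]
    simp
  have hcomm : killingForm ℂ g h₂ h₁ = killingForm ℂ g h₁ h₂ :=
    LieModule.traceForm_comm ℂ g g h₂ h₁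
  rw [k1, k2]
  have : (2 : ℂ) * killingForm ℂ g E f₁ = (2 : ℂ) * killingForm ℂ g E f₂ := by
    rw [m1, m2, hcomm]
  exact mul_left_cancel₀ two_ne_zero this

/-- Let `g` be a finite-dimensional complex semisimple Lie algebra with Killing form `κ`,
let `ζ, e ∈ g` with `⁅ζ, e⁆ = e`, and let `φ` be a Lie algebra automorphism of `g` fixing `ζ`.
If `(h, e, f)` and `(h', φ(e), f')` are `sl₂`-triples in `g`, then `κ(ζ, h) = κ(ζ, h')`,
so the Toledo rank is well defined. -/
theorem killingForm_zeta_h_welldefined {g : Type*} [LieRing g] [LieAlgebra ℂ g]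
    [Module.Finite ℂ g] [LieAlgebra.IsSemisimple ℂ g]
    (ζ e : g) (hζe : ⁅ζ, e⁆ = e) (φ : g ≃ₗ⁅ℂ⁆ g) (hφζ : φ ζ = ζ)
    (h f h' f' : g) (h1 : IsSl2TripleIn h e f) (h2 : IsSl2TripleIn h' (φ e) f') :
    killingForm ℂ g ζ h = killingForm ℂ g ζ h' := by
  have hE : ⁅ζ, φ e⁆ = φ e := by
    conv_lhs => rw [← hφζ]
    rw [← LieEquiv.map_lie, hζe]
  have h1' : IsSl2TripleIn (φ h) (φ e) (φ f) := by
    obtain ⟨a, b, c⟩ := h1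
    refine ⟨?_, ?_, ?_⟩
    · rw [← LieEquiv.map_lie, a]; exact φ.toLinearEquiv.map_smul 2 e
    · rw [← LieEquiv.map_lie, b]; exact φ.toLinearEquiv.map_smul (-2) f
    · rw [← LieEquiv.map_lie, c]
  have hinv : killingForm ℂ g ζ h = killingForm ℂ g ζ (φ h) := by
    conv_rhs => rw [← hφζ]
    rw [LieAlgebra.killingForm_of_equiv_apply]
  rw [hinv]
  exact killingForm_zeta_h_key ζ (φ e) hE (φ h) (φ f) h' f' h1' h2
end

section
/- Let g be a finite-dimensional complex semisimple Lie algebra with Killing form κ, and let τ : g → g be a compact real structure: a conjugate-linear involution with τ⁅x, y⁆ = ⁅τ(x), τ(y)⁆, such that ⟨x, y⟩ := κ(−τ(x), y) is a positive-definite Hermitian inner product on g. For e ∈ g set e* = −τ(e) and h = ⁅e, e*⁆, and suppose ⁅h, e⁆ = 2·e (so that (h, e, e*) is an sl₂-triple). Suppose further ζ ∈ g satisfies ⁅ζ, e⁆ = e. Then: (i) τ(h) = −h; (ii) ⟨h, h⟩ = κ(h, h) = 2·⟨e, e⟩; (iii) ⟨e, e⟩ = κ(ζ, h). Consequently, if e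 ≠ 0, the holomorphic sectional curvature K(e) = −⟨⁅e, e*⁆, ⁅e, e*⁆⟩ / ⟨e, e⟩² equals −2 / κ(ζ, h), the critical value computed in Proposition 3.10 (equivalently K_norm(e) = −1/rk_T(e) after normalization). -/
/-- Let `g` be a finite-dimensional complex semisimple Lie algebra with Killing form `κ` and
`τ` a compact real structure on `g`: a conjugate-linear involutive Lie algebra automorphism
such that `⟨x, y⟩ = κ(-τ(x), y)` is a positive-definite Hermitian inner product.  For `e ∈ g`
set `e* = -τ(e)` and `h = ⁅e, e*⁆`, and suppose `⁅h, e⁆ = 2e` and `⁅ζ, e⁆ = e`.  Then: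
(i) `τ(h) = -h`; (ii) `⟨h,h⟩ = κ(h,h) = 2⟨e,e⟩`; (iii) `⟨e,e⟩ = κ(ζ,h)`; and consequently if
`e ≠ 0` the holomorphic sectional curvature `K(e) = -⟨⁅e,e*⁆,⁅e,e*⁆⟩/⟨e,e⟩²` equals
`-2/κ(ζ,h)`. -/
theorem curvature_critical_value {g : Type*} [LieRing g] [LieAlgebra ℂ g]
    [Module.Finite ℂ g] [LieAlgebra.IsSemisimple ℂ g]
    (τ : g → g)
    (hadd : ∀ x y : g, τ (x + y) = τ x + τ y)
    (hsmul : ∀ (c : ℂ) (x : g), τ (c • x) = (starRingEnd ℂ c) • τ x)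
    (hinvol : ∀ x : g, τ (τ x) = x)
    (hlie : ∀ x y : g, τ ⁅x, y⁆ = ⁅τ x, τ y⁆)
    (hherm : ∀ x y : g,
      killingForm ℂ g (-τ x) y = starRingEnd ℂ (killingForm ℂ g (-τ y) x))
    (hpos : ∀ x : g, x ≠ 0 → 0 < (killingForm ℂ g (-τ x) x).re)
    (ζ e h : g)
    (hh : h = ⁅e, -τ e⁆)
    (hhe : ⁅h, e⁆ = (2 : ℂ) • e)
    (hζe : ⁅ζ, e⁆ = e) :
    τ h = -h ∧
    killingForm ℂ g (-τ h) h = killingForm ℂ g h h ∧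
    killingForm ℂ g h h = 2 * killingForm ℂ g (-τ e) e ∧
    killingForm ℂ g (-τ e) e = killingForm ℂ g ζ h ∧
    (e ≠ 0 →
      -(killingForm ℂ g (-τ ⁅e, -τ e⁆) ⁅e, -τ e⁆) / (killingForm ℂ g (-τ e) e) ^ 2
        = -2 / killingForm ℂ g ζ h) := by
  have hτneg : ∀ x : g, τ (-x) = -τ x := by
    intro x
    have := hsmul (-1) x
    simpa [neg_one_smul] using this
  -- (i)
  have hi : τ h = -h := by
    rw [hh, hlie, hτneg, hinvol, lie_neg, ← neg_lie, lie_skew]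
  -- ⁅e*, h⁆ = 2 e*
  have hestar : ⁅(-τ e), h⁆ = (2 : ℂ) • (-τ e) := by
    have key := hlie h e
    rw [hhe, hsmul, hi, neg_lie] at key
    simp only [map_ofNat] at key
    -- key : (2:ℂ) • τ e = -⁅h, τ e⁆
    calc ⁅(-τ e), h⁆ = -⁅τ e, h⁆ := neg_lie _ _
    _ = ⁅h, τ e⁆ := lie_skew _ _
    _ = -((2 : ℂ) • τ e) := by rw [key, neg_neg]
    _ = (2 : ℂ) • (-τ e) := (smul_neg _ _).symm
  -- κ(h,h) = 2 ⟨e,e⟩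
  have hκhh : killingForm ℂ g h h = 2 * killingForm ℂ g (-τ e) e := by
    calc killingForm ℂ g h h = killingForm ℂ g ⁅e, -τ e⁆ h := by rw [hh]
    _ = killingForm ℂ g e ⁅(-τ e), h⁆ := LieModule.traceForm_apply_lie_apply ℂ g g e (-τ e) h
    _ = killingForm ℂ g e ((2 : ℂ) • (-τ e)) := by rw [hestar]
    _ = 2 * killingForm ℂ g e (-τ e) := by simp
    _ = 2 * killingForm ℂ g (-τ e) e := by rw [LieModule.traceForm_comm ℂ g g e (-τ e)]
  have hii : killingForm ℂ g (-τ h) h = killingForm ℂ g h h := by rw [hi, neg_neg]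
  -- (iii)
  have hiii : killingForm ℂ g (-τ e) e = killingForm ℂ g ζ h := by
    calc killingForm ℂ g (-τ e) e = killingForm ℂ g e (-τ e) :=
          LieModule.traceForm_comm ℂ g g (-τ e) e
    _ = killingForm ℂ g ⁅ζ, e⁆ (-τ e) := by rw [hζe]
    _ = killingForm ℂ g ζ ⁅e, -τ e⁆ := LieModule.traceForm_apply_lie_apply ℂ g g ζ e (-τ e)
    _ = killingForm ℂ g ζ h := by rw [← hh]
  refine ⟨hi, hii, hκhh, hiii, ?_⟩
  intro he
  have hne : killingForm ℂ g (-τ e) e ≠ 0 := by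
    intro h0
    have := hpos e he
    rw [h0] at this
    simp at this
  have hnum : killingForm ℂ g (-τ ⁅e, -τ e⁆) ⁅e, -τ e⁆ = 2 * killingForm ℂ g (-τ e) e := by
    rw [← hh, hii, hκhh]
  rw [hnum, ← hiii]
  set a := killingForm ℂ g (-τ e) e with ha
  field_simp
end

section
/- Let g be a finite-dimensional complex Lie algebra and let (h, e, f) be an sl₂-triple in g. If x ∈ g satisfies ⁅x, h⁆ = 0 and ⁅x, e⁆ = 0, then also ⁅x, f⁆ = 0. Hence the centralizer in g of the pair {h, e} coincides with the centralizer of the whole sl₂-subalgebra spanned by {h, e, f}. (This is the key step in Corollary 2.8, showing that the stabilizer G₀^e of e in G₀ stabilizes the entire sl₂-triple, so that the prehomogeneous vector space (G₀, g₂) arising from an sl₂-triple is regular.) -/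
/-- Let `(h, e, f)` be an `sl₂`-triple in a finite-dimensional complex Lie algebra `g`.  If
`x ∈ g` centralizes `h` and `e`, then it also centralizes `f`; hence the centralizer of the
pair `{h, e}` coincides with the centralizer of the whole `sl₂`-subalgebra spanned by
`{h, e, f}`. -/
theorem centralizer_he_eq_centralizer_hef {g : Type*} [LieRing g] [LieAlgebra ℂ g]
    [Module.Finite ℂ g]
    (h e f : g) (hsl2 : IsSl2TripleIn h e f) :
    (∀ x : g, ⁅x, h⁆ = 0 → ⁅x, e⁆ = 0 → ⁅x, f⁆ = 0) ∧
    {x : g | ⁅x, h⁆ = 0 ∧ ⁅x, e⁆ = 0} =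
      {x : g | ⁅x, h⁆ = 0 ∧ ⁅x, e⁆ = 0 ∧ ⁅x, f⁆ = 0} := by
  obtain ⟨hhe, hhf, hef⟩ := hsl2
  have key : ∀ x : g, ⁅x, h⁆ = 0 → ⁅x, e⁆ = 0 → ⁅x, f⁆ = 0 := by
    intro x hxh hxe
    by_cases hh : h = 0
    · -- Degenerate case: `h = 0` forces `f = 0`.
      have hf0 : f = 0 := by
        have : (-2 : ℂ) • f = 0 := by rw [← hhf, hh, zero_lie]
        simpa using this
      simp [hf0]
    · have triple : IsSl2Triple h e f :=
        { h_ne_zero := hh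
          lie_e_f := hef
          lie_h_e_nsmul := by rw [hhe]; module
          lie_h_f_nsmul := by rw [hhf]; module }
      by_contra hy
      set y : g := ⁅x, f⁆ with hy'
      have hxh' : ⁅h, x⁆ = 0 := by rw [← lie_skew, hxh, neg_zero]
      have hxe' : ⁅e, x⁆ = 0 := by rw [← lie_skew, hxe, neg_zero]
      have prim : triple.HasPrimitiveVectorWith y (-2 : ℂ) :=
        { ne_zero := hy
          lie_h := by
            rw [hy', leibniz_lie, hxh', zero_lie, zero_add, hhf, lie_smul]
          lie_e := by
            rw [hy', leibniz_lie, hxe', zero_lie, zero_add, hef, hxh] }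
      obtain ⟨n, hn⟩ := prim.exists_nat
      have : (-2 : ℤ) = n := by exact_mod_cast hn
      omega
  refine ⟨key, ?_⟩
  ext x
  simp only [Set.mem_setOf_eq]
  exact ⟨fun ⟨a, b⟩ => ⟨a, b, key x a b⟩, fun ⟨a, b, _⟩ => ⟨a, b⟩⟩
end

section
/- Let g be a finite-dimensional complex semisimple Lie algebra, let ζ ∈ g with ad ζ diagonalizable, and let (h, e, f) be an sl₂-triple in g with ⁅ζ, e⁆ = e, ⁅ζ, h⁆ = 0, and ⁅ζ, f⁆ = −f. Then {⁅x, e⁆ : x ∈ g, ⁅ζ, x⁆ = 0 and ⁅h, x⁆ = 0} = {y ∈ g : ⁅ζ, y⁆ = y and ⁅h, y⁆ = 2·y}. In other words ⁅ĝ₀, e⁆ = ĝ₁, where ĝ₀ = g₀ ∩ ker(ad h) and ĝ₁ = g₁ ∩ ker(ad h − 2). (Infinitesimal form of Proposition 2.12: e lies in the open Ĝ₀-orbit of the maximal Jacobson–Morozov regular prehomogeneous vector subspace (Ĝ₀, ĝ₁).) -/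
/-- Key `sl₂` lemma: if `u` lies in `ĝ₁` and `⁅e, ⁅f, u⁆⁆ = 0` then `u = 0`. -/
lemma sl2_ef_inj_aux {g : Type*} [LieRing g] [LieAlgebra ℂ g] [Module.Finite ℂ g]
    (ζ h e f : g)
    (hhe : ⁅h, e⁆ = (2 : ℂ) • e) (hef : ⁅e, f⁆ = h)
    (hζe : ⁅ζ, e⁆ = e)
    (u : g) (hzu : ⁅ζ, u⁆ = u) (hhu : ⁅h, u⁆ = (2 : ℂ) • u)
    (h0 : ⁅e, ⁅f, u⁆⁆ = 0) : u = 0 := by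
  by_contra hne
  set A := LieAlgebra.ad ℂ g e with hA
  set w : ℕ → g := fun j => (A ^ j) u with hwdef
  have hw0 : w 0 = u := by simp [hwdef]
  have hwsucc : ∀ j, w (j + 1) = ⁅e, w j⁆ := by
    intro j
    simp [hwdef, pow_succ', Module.End.mul_apply, hA, LieAlgebra.ad_apply]
  have key : ∀ j : ℕ, ⁅ζ, w j⁆ = ((j : ℂ) + 1) • w j ∧
      ⁅h, w j⁆ = (2 * (j : ℂ) + 2) • w j ∧
      ⁅f, w (j + 1)⁆ = (-((j : ℂ) + 1) * ((j : ℂ) + 2)) • w j := by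
    intro j
    induction j with
    | zero =>
      refine ⟨by simpa [hw0] using hzu, by simpa [hw0] using hhu, ?_⟩
      have hfe : ⁅f, e⁆ = -h := by rw [← lie_skew, hef]
      rw [hwsucc 0, hw0, leibniz_lie f e u, h0, hfe, neg_lie, hhu]
      push_cast
      module
    | succ j ih =>
      obtain ⟨ihz, ihh, ihf⟩ := ih
      have hz1 : ⁅ζ, w (j + 1)⁆ = ((j : ℂ) + 1 + 1) • w (j + 1) := by
        rw [hwsucc j, leibniz_lie ζ e (w j), hζe, ihz, lie_smul, ← hwsucc j]
        rw [hwsucc j]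
        module
      have hh1 : ⁅h, w (j + 1)⁆ = (2 * ((j : ℂ) + 1) + 2) • w (j + 1) := by
        rw [hwsucc j, leibniz_lie h e (w j), hhe, ihh, lie_smul, smul_lie, ← hwsucc j]
        rw [hwsucc j]
        module
      refine ⟨by push_cast; exact hz1, by push_cast; exact hh1, ?_⟩
      have hfe : ⁅f, e⁆ = -h := by rw [← lie_skew, hef]
      rw [hwsucc (j + 1), leibniz_lie f e (w (j + 1)), hfe, neg_lie, hh1, ihf, lie_smul,
        ← hwsucc j]
      push_cast
      module
  have hnz : ∀ j : ℕ, w j ≠ 0 := by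
    intro j
    induction j with
    | zero => simpa [hw0] using hne
    | succ j ih =>
      intro hcon
      have := (key j).2.2
      rw [hcon, lie_zero] at this
      have hμ : (-((j : ℂ) + 1) * ((j : ℂ) + 2)) ≠ 0 := by
        have h1 : ((j : ℂ) + 1) ≠ 0 := by
          have : ((j : ℂ) + 1) = ((j + 1 : ℕ) : ℂ) := by push_cast; ring
          rw [this, Ne, Nat.cast_eq_zero]; omega
        have h2 : ((j : ℂ) + 2) ≠ 0 := by
          have : ((j : ℂ) + 2) = ((j + 2 : ℕ) : ℂ) := by push_cast; ring
          rw [this, Ne, Nat.cast_eq_zero]; omega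
        exact mul_ne_zero (neg_ne_zero.mpr h1) h2
      exact ih ((smul_eq_zero_iff_right hμ).mp this.symm)
  have hs : (Set.range fun n : ℕ => (n : ℂ) + 1).Infinite := by
    rw [Set.infinite_range_iff (fun n m hnm => by exact_mod_cast add_right_cancel hnm)]
    infer_instance
  exact hs (((LieAlgebra.ad ℂ g ζ).eigenvectors_linearIndependent
    {(n : ℂ) + 1 | n : ℕ}
    (fun s => w (Classical.choose s.2))
    (fun s => by
      rw [Module.End.hasEigenvector_iff, Module.End.mem_eigenspace_iff]
      refine ⟨?_, hnz _⟩
      rw [LieAlgebra.ad_apply, (key (Classical.choose s.2)).1, Classical.choose_spec s.2])).finite)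

/-- Let `g` be a finite-dimensional complex semisimple Lie algebra, `ζ ∈ g` with `ad ζ`
diagonalizable, and `(h, e, f)` an `sl₂`-triple with `⁅ζ, e⁆ = e`, `⁅ζ, h⁆ = 0`, `⁅ζ, f⁆ = -f`.
Then `⁅ĝ₀, e⁆ = ĝ₁`, where `ĝ₀ = {x | ⁅ζ,x⁆ = 0 ∧ ⁅h,x⁆ = 0}` and
`ĝ₁ = {y | ⁅ζ,y⁆ = y ∧ ⁅h,y⁆ = 2y}`: the infinitesimal form of the statement that `e` lies in
the open `Ĝ₀`-orbit of the maximal Jacobson–Morozov regular prehomogeneous vector subspace. -/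
theorem bracket_hat_g0_e_eq_hat_g1 {g : Type*} [LieRing g] [LieAlgebra ℂ g]
    [Module.Finite ℂ g] [LieAlgebra.IsSemisimple ℂ g]
    (ζ : g)
    (hdiag : ⨆ μ : ℂ, Module.End.eigenspace (LieAlgebra.ad ℂ g ζ) μ = ⊤)
    (h e f : g) (hsl2 : IsSl2TripleIn h e f)
    (hζe : ⁅ζ, e⁆ = e) (hζh : ⁅ζ, h⁆ = 0) (hζf : ⁅ζ, f⁆ = -f) :
    {y : g | ∃ x : g, ⁅ζ, x⁆ = 0 ∧ ⁅h, x⁆ = 0 ∧ ⁅x, e⁆ = y} =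
      {y : g | ⁅ζ, y⁆ = y ∧ ⁅h, y⁆ = (2 : ℂ) • y} := by
  obtain ⟨hhe, hhf, hef⟩ := hsl2
  ext y
  simp only [Set.mem_setOf_eq]
  constructor
  · rintro ⟨x, hzx, hhx, rfl⟩
    constructor
    · rw [leibniz_lie ζ x e, hzx, hζe, zero_lie, zero_add]
    · rw [leibniz_lie h x e, hhx, hhe, zero_lie, zero_add, lie_smul]
  · rintro ⟨hzy, hhy⟩
    -- the submodule `ĝ₁`
    set U : Submodule ℂ g :=
      Module.End.eigenspace (LieAlgebra.ad ℂ g ζ) 1 ⊓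
        Module.End.eigenspace (LieAlgebra.ad ℂ g h) 2 with hU
    have hmemU : ∀ x : g, x ∈ U ↔ (⁅ζ, x⁆ = x ∧ ⁅h, x⁆ = (2 : ℂ) • x) := by
      intro x
      simp [hU, Submodule.mem_inf, Module.End.mem_eigenspace_iff, LieAlgebra.ad_apply]
    -- `⁅f, ·⁆` maps `ĝ₁` into `ĝ₀`
    have hFmap : ∀ x : g, x ∈ U → ⁅ζ, ⁅f, x⁆⁆ = 0 ∧ ⁅h, ⁅f, x⁆⁆ = 0 := by
      intro x hx
      obtain ⟨hzx, hhx⟩ := (hmemU x).mp hx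
      constructor
      · rw [leibniz_lie ζ f x, hζf, hzx, neg_lie, neg_add_cancel]
      · rw [leibniz_lie h f x, hhf, hhx, lie_smul, smul_lie, neg_smul, neg_add_cancel]
    -- `⁅e, ·⁆` maps `ĝ₀` into `ĝ₁`
    have hEmap : ∀ x : g, ⁅ζ, x⁆ = 0 → ⁅h, x⁆ = 0 → ⁅e, x⁆ ∈ U := by
      intro x h1 h2
      rw [hmemU]
      constructor
      · rw [leibniz_lie ζ e x, hζe, h1, lie_zero, add_zero]
      · rw [leibniz_lie h e x, hhe, h2, lie_zero, add_zero, smul_lie]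
    have hUmap : ∀ x : g, x ∈ U → ⁅e, ⁅f, x⁆⁆ ∈ U := fun x hx =>
      hEmap _ (hFmap x hx).1 (hFmap x hx).2
    -- the map `EF : ĝ₁ → ĝ₁`
    let φ : U →ₗ[ℂ] U :=
      ((LieAlgebra.ad ℂ g e) ∘ₗ (LieAlgebra.ad ℂ g f)).restrict
        (fun x hx => by simpa [LieAlgebra.ad_apply] using hUmap x hx)
    have hφ : ∀ u : U, (φ u : g) = ⁅e, ⁅f, (u : g)⁆⁆ := by
      intro u
      simp [φ, LinearMap.restrict_apply, LieAlgebra.ad_apply]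
    have hinj : Function.Injective φ := by
      intro u v huv
      have h1 : ⁅e, ⁅f, ((u : g) - (v : g))⁆⁆ = 0 := by
        have : (φ u : g) = (φ v : g) := by rw [huv]
        rw [hφ, hφ] at this
        rw [lie_sub, lie_sub, this, sub_self]
      have h2 := (hmemU _).mp (Submodule.sub_mem U u.2 v.2)
      have := sl2_ef_inj_aux ζ h e f hhe hef hζe _ h2.1 h2.2 h1
      exact Subtype.ext (sub_eq_zero.mp this)
    have hsurj : Function.Surjective φ := LinearMap.injective_iff_surjective.mp hinj
    obtain ⟨u, hu⟩ := hsurj ⟨y, (hmemU y).mpr ⟨hzy, hhy⟩⟩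
    refine ⟨-⁅f, (u : g)⁆, ?_, ?_, ?_⟩
    · rw [lie_neg, (hFmap _ u.2).1, neg_zero]
    · rw [lie_neg, (hFmap _ u.2).2, neg_zero]
    · have : (φ u : g) = y := by rw [hu]
      rw [hφ] at this
      rw [neg_lie, ← lie_skew, neg_neg, this]
end
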